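/- For every integer d ≥ 4 and every p ∈ (0,1), the series ∑_{n=0}^∞ ∑_{k=0}^n [C(n,k)·p^k·(1-p)^{n-k}]^d converges. -/

import Mathlib

/-!
The binomial weight `C(n,k) p^k (1-p)^(n-k)` is the `k`-th Fourier coefficient of `φ(t)^n`,
where `φ(t) = (1-p) + p e^{it}` is the characteristic function of a Bernoulli variable. Since
`|φ(t)| ≤ exp (-2p(1-p)t²/π²)` on `[-π, π]`, a Gaussian integral bounds every weight by
`√(π / (8p(1-p)n))`. The weights sum to `1`, so `∑ₖ wₖ^d ≤ (maxₖ wₖ)^(d-1) = O(n^(-(d-1)/2))`,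
which is summable for `d ≥ 4`.
-/

open Real intervalIntegral Finset

noncomputable def bernoulliCharFun (p t : ℝ) : ℂ := (1 - p : ℂ) + p * Complex.exp (t * Complex.I)

lemma integral_exp_int_mul_mul_I_eq_zero {m : ℤ} (hm : m ≠ 0) :
    ∫ t in (-π)..π, Complex.exp (m * t * Complex.I) = 0 := by
  have hc : (m : ℂ) * Complex.I ≠ 0 := by simp [Complex.I_ne_zero, hm]
  simp only [mul_right_comm _ _ Complex.I]
  rw [integral_exp_mul_complex hc, sub_eq_zero.2, zero_div]
  exact Complex.exp_eq_exp_iff_exists_int.2 ⟨m, by push_cast; ring⟩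

lemma integral_bernoulliCharFun_pow_mul_exp (p : ℝ) (n k : ℕ) :
    ∫ t in (-π)..π, bernoulliCharFun p t ^ n * Complex.exp (-(k * t * Complex.I)) =
      ((2 * π * (n.choose k * p ^ k * (1 - p) ^ (n - k)) : ℝ) : ℂ) := by
  have expand : ∀ t : ℝ, bernoulliCharFun p t ^ n * Complex.exp (-(k * t * Complex.I)) =
      ∑ j ∈ range (n + 1), ((n.choose j * p ^ j * (1 - p) ^ (n - j) : ℝ) : ℂ) *
        Complex.exp (((j - k : ℤ) : ℂ) * t * Complex.I) := by
    intro t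
    rw [bernoulliCharFun, add_comm, add_pow, sum_mul]
    refine sum_congr rfl fun j _ => ?_
    rw [mul_pow, ← Complex.exp_nat_mul]
    push_cast
    rw [sub_mul, sub_mul, Complex.exp_sub, Complex.exp_neg, div_eq_mul_inv]
    ring_nf
  simp only [expand]
  rw [integral_finsetSum fun j _ => by apply Continuous.intervalIntegrable; fun_prop,
    sum_eq_single k]
  · simp only [sub_self, Int.cast_zero, zero_mul, Complex.exp_zero, mul_one]
    rw [integral_const, Complex.real_smul]
    push_cast
    ring
  · intro j _ hjk
    rw [integral_const_mul, integral_exp_int_mul_mul_I_eq_zero (by omega), mul_zero]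
  · intro hk
    simp [Nat.choose_eq_zero_of_lt (by simpa using hk : n < k)]

lemma norm_bernoulliCharFun_sq (p t : ℝ) :
    ‖bernoulliCharFun p t‖ ^ 2 = 1 - 2 * p * (1 - p) * (1 - cos t) := by
  have : bernoulliCharFun p t = ⟨1 - p + p * cos t, p * sin t⟩ := by
    apply Complex.ext <;> simp [bernoulliCharFun, Complex.exp_ofReal_mul_I_re,
      Complex.exp_ofReal_mul_I_im]
  rw [Complex.sq_norm, this, Complex.normSq_mk]
  linear_combination p ^ 2 * sin_sq_add_cos_sq t

lemma norm_bernoulliCharFun_le {p t : ℝ} (hp0 : 0 ≤ p) (hp1 : p ≤ 1) (ht : |t| ≤ π) :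
    ‖bernoulliCharFun p t‖ ≤ exp (-(2 * p * (1 - p) / π ^ 2) * t ^ 2) := by
  have hpq : 0 ≤ 2 * p * (1 - p) := by nlinarith
  have hsq : ‖bernoulliCharFun p t‖ ^ 2 ≤ exp (-(2 * p * (1 - p) / π ^ 2) * t ^ 2) ^ 2 :=
    calc ‖bernoulliCharFun p t‖ ^ 2 = 1 - 2 * p * (1 - p) * (1 - cos t) :=
          norm_bernoulliCharFun_sq p t
      _ ≤ 1 - 2 * p * (1 - p) * (2 / π ^ 2 * t ^ 2) := by
          gcongr; linarith [cos_le_one_sub_mul_cos_sq ht]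
      _ = -(2 * (2 * p * (1 - p) / π ^ 2) * t ^ 2) + 1 := by ring
      _ ≤ exp (-(2 * (2 * p * (1 - p) / π ^ 2) * t ^ 2)) := add_one_le_exp _
      _ = exp (-(2 * p * (1 - p) / π ^ 2) * t ^ 2) ^ 2 := by rw [← exp_nat_mul]; ring_nf
  exact (pow_le_pow_iff_left₀ (norm_nonneg _) (exp_nonneg _) two_ne_zero).1 hsq

lemma integral_exp_neg_mul_sq_le {b : ℝ} (hb : 0 < b) {a c : ℝ} (hac : a ≤ c) :
    ∫ t in a..c, exp (-b * t ^ 2) ≤ √(π / b) := by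
  rw [integral_of_le hac, ← integral_gaussian]
  exact MeasureTheory.setIntegral_le_integral (integrable_exp_neg_mul_sq hb)
    (.of_forall fun _ => (exp_pos _).le)

lemma choose_mul_pow_mul_pow_le {p : ℝ} (hp0 : 0 < p) (hp1 : p < 1) {n : ℕ} (hn : n ≠ 0)
    (k : ℕ) : n.choose k * p ^ k * (1 - p) ^ (n - k) ≤ √(π / (8 * p * (1 - p)) / n) := by
  set a := (n.choose k : ℝ) * p ^ k * (1 - p) ^ (n - k)
  set b := 2 * n * p * (1 - p) / π ^ 2 with hb_def
  have hq : 0 < 1 - p := by linarith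
  have hb : 0 < b := by positivity
  have hpi : -π ≤ π := by linarith [pi_pos]
  have hfourier : 2 * π * a ≤ √(π / b) :=
    calc 2 * π * a = ‖∫ t in (-π)..π,
            bernoulliCharFun p t ^ n * Complex.exp (-(k * t * Complex.I))‖ := by
          rw [integral_bernoulliCharFun_pow_mul_exp, Complex.norm_real,
            norm_of_nonneg (by positivity)]
      _ ≤ ∫ t in (-π)..π, ‖bernoulliCharFun p t‖ ^ n := by
          refine (norm_integral_le_integral_norm hpi).trans_eq (integral_congr fun t _ => ?_)
          simp [Complex.norm_exp]
      _ ≤ ∫ t in (-π)..π, exp (-b * t ^ 2) := by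
          have hφ : Continuous (bernoulliCharFun p) := by unfold bernoulliCharFun; fun_prop
          refine integral_mono_on hpi ((hφ.norm.pow n).intervalIntegrable _ _)
            (by apply Continuous.intervalIntegrable; fun_prop) fun t ht => ?_
          calc ‖bernoulliCharFun p t‖ ^ n
              ≤ exp (-(2 * p * (1 - p) / π ^ 2) * t ^ 2) ^ n := by
                gcongr; exact norm_bernoulliCharFun_le hp0.le hp1.le (abs_le.2 ht)
            _ = exp (-b * t ^ 2) := by rw [← exp_nat_mul, hb_def]; ring_nf
      _ ≤ √(π / b) := integral_exp_neg_mul_sq_le hb hpi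
  have hsq := (le_sqrt (by positivity) (by positivity)).1 hfourier
  rw [le_sqrt (by positivity) (by positivity)]
  calc a ^ 2 = (2 * π * a) ^ 2 / (4 * π ^ 2) := by field_simp; ring
    _ ≤ π / b / (4 * π ^ 2) := by gcongr
    _ = π / (8 * p * (1 - p)) / n := by rw [hb_def]; field_simp; ring

lemma sum_choose_mul_pow_mul_pow_eq_one (p : ℝ) (n : ℕ) :
    ∑ k ∈ range (n + 1), (n.choose k : ℝ) * p ^ k * (1 - p) ^ (n - k) = 1 := by
  have h := add_pow p (1 - p) n
  rw [add_sub_cancel, one_pow] at h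
  exact (sum_congr rfl fun k _ => by ring).trans h.symm

lemma Finset.sum_pow_succ_le_pow_mul_sum {ι : Type*} {s : Finset ι} {f : ι → ℝ} {M : ℝ}
    (hf0 : ∀ i ∈ s, 0 ≤ f i) (hfM : ∀ i ∈ s, f i ≤ M) (j : ℕ) :
    ∑ i ∈ s, f i ^ (j + 1) ≤ M ^ j * ∑ i ∈ s, f i := by
  rw [mul_sum]
  refine sum_le_sum fun i hi => ?_
  rw [pow_succ]
  exact mul_le_mul_of_nonneg_right (pow_le_pow_left₀ (hf0 i hi) (hfM i hi) j) (hf0 i hi)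

lemma summable_sqrt_div_pow (c : ℝ) {j : ℕ} (hj : 3 ≤ j) :
    Summable fun n : ℕ => √(c / n) ^ j := by
  have hrpow : Summable fun n : ℕ => ((n : ℝ) ^ (j / 2 : ℝ))⁻¹ :=
    summable_nat_rpow_inv.2 (by rw [lt_div_iff₀ two_pos]; exact_mod_cast hj)
  refine (hrpow.mul_left (√c ^ j)).congr fun n => ?_
  have hsqrt : √(n : ℝ) ^ j = (n : ℝ) ^ (j / 2 : ℝ) := by
    rw [sqrt_eq_rpow, ← rpow_natCast, ← rpow_mul n.cast_nonneg, one_div_mul_eq_div]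
  rw [sqrt_div' c n.cast_nonneg, div_pow, hsqrt]
  exact (div_eq_mul_inv _ _).symm

theorem stmt_6 (d : ℕ) (hd : 4 ≤ d) (p : ℝ) (hp : 0 < p) (hp1 : p < 1) :
    Summable (fun n : ℕ => ∑ k ∈ Finset.range (n + 1),
      ((n.choose k : ℝ) * p ^ k * (1 - p) ^ (n - k)) ^ d) := by
  obtain ⟨j, rfl⟩ : ∃ j, d = j + 1 := ⟨d - 1, by omega⟩
  -- at `n = 0` the bound `√(c / 0) = 0` is a junk value, hence only a cofinite comparison
  refine (summable_sqrt_div_pow (π / (8 * p * (1 - p))) (j := j) (by omega))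
    |>.of_norm_bounded_eventually ((Filter.eventually_cofinite_ne 0).mono fun n hn => ?_)
  have hq : 0 < 1 - p := by linarith
  rw [norm_of_nonneg (sum_nonneg fun k _ => by positivity)]
  calc _ ≤ √(π / (8 * p * (1 - p)) / n) ^ j *
          ∑ k ∈ range (n + 1), (n.choose k : ℝ) * p ^ k * (1 - p) ^ (n - k) :=
        sum_pow_succ_le_pow_mul_sum (fun k _ => by positivity)
          (fun k _ => choose_mul_pow_mul_pow_le hp hp1 hn k) j
    _ = _ := by rw [sum_choose_mul_pow_mul_pow_eq_one, mul_one]
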